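/- arXiv:2110.15940 — 2 statements merged into one kernel-verified Lean document; each statement's English description precedes it below -/
import Mathlib

section
/- Let k, N be natural numbers with 1 ≤ k < N and set n := N − k. In the exterior algebra Λ(V) over ℝ, the element (tr Φ)^{kn} equals (kn)! · T, where T is the top-degree generator. (This computes the fermionic representation of ∫_{G(k,N)} (σ₁^∨)^{kN−k²} and yields the value (kN−k²)! · (∏_{j=0}^{k−1} j!)/(∏_{j=N−k}^{N−1} j!).) -/
noncomputable section

/-- The real vector space with basis `ψ_s^j` (inl) and `ψ̄_s^j` (inr),
    `1 ≤ s ≤ n`, `1 ≤ j ≤ k`. -/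
abbrev V (k n : ℕ) : Type := ((Fin n × Fin k) ⊕ (Fin n × Fin k)) → ℝ

/-- The fermionic variable `ψ_s^j` as a degree-1 element of the exterior algebra. -/
def ψ (k n : ℕ) (s : Fin n) (j : Fin k) : ExteriorAlgebra ℝ (V k n) :=
  ExteriorAlgebra.ι ℝ (Pi.single (Sum.inl (s, j)) (1 : ℝ))

/-- The fermionic variable `ψ̄_s^j` as a degree-1 element of the exterior algebra. -/
def ψb (k n : ℕ) (s : Fin n) (j : Fin k) : ExteriorAlgebra ℝ (V k n) :=
  ExteriorAlgebra.ι ℝ (Pi.single (Sum.inr (s, j)) (1 : ℝ))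

/-- `ω^{ij} = ∑_{s=1}^n ψ_s^i ∧ ψ̄_s^j`. -/
def ω (k n : ℕ) (i j : Fin k) : ExteriorAlgebra ℝ (V k n) :=
  ∑ s : Fin n, ψ k n s i * ψb k n s j

/-- `tr Φ = ∑_{i=1}^k ω^{ii}`. -/
def trPhi (k n : ℕ) : ExteriorAlgebra ℝ (V k n) :=
  ∑ i : Fin k, ω k n i i

/-- `tr(Φ²) = ∑_{i,j=1}^k ω^{ij} ∧ ω^{ji}`. -/
def trPhi2 (k n : ℕ) : ExteriorAlgebra ℝ (V k n) :=
  ∑ i : Fin k, ∑ j : Fin k, ω k n i j * ω k n j i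

/-- The top-degree generator `T = ∧_{s=1}^n (ψ_s^1 ∧ ψ̄_s^1 ∧ ⋯ ∧ ψ_s^k ∧ ψ̄_s^k)`. -/
def T (k n : ℕ) : ExteriorAlgebra ℝ (V k n) :=
  ((List.finRange n).map (fun s =>
    ((List.finRange k).map (fun j => ψ k n s j * ψb k n s j)).prod)).prod

/-!
Each summand `ψ_s^j ∧ ψ̄_s^j` of `tr Φ` is a product of two generators, so the `kn` summands
commute with each other and square to zero. Expanding `(tr Φ)^{kn}`, only the words using every
summand exactly once survive, and all `(kn)!` of them equal their product in a fixed order, `T`.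
-/

section SquareZero

variable {A : Type*} [Semiring A]

theorem Commute.add_pow_succ_of_mul_self_eq_zero {x y : A} (h : Commute x y) (hx : x * x = 0)
    (n : ℕ) : (x + y) ^ (n + 1) = y ^ (n + 1) + (n + 1) • (x * y ^ n) := by
  induction n with
  | zero => simp [add_comm]
  | succ n ih =>
    have hxy : x * (x * y ^ n) = 0 := by rw [← mul_assoc, hx, zero_mul]
    have hyx : y * (x * y ^ n) = x * y ^ (n + 1) := by
      rw [← mul_assoc, ← h.eq, mul_assoc, pow_succ']
    rw [pow_succ' _ (n + 1), ih, add_mul, mul_add, mul_add, mul_smul_comm, mul_smul_comm, hxy,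
      hyx, smul_zero, add_zero, ← pow_succ', succ_nsmul _ (n + 1)]
    abel

theorem List.mul_prod_eq_zero_of_mem {L : List A} {b : A} (hb : b ∈ L)
    (hcomm : ∀ y ∈ L, Commute b y) (hbb : b * b = 0) : b * L.prod = 0 := by
  induction L with
  | nil => simp at hb
  | cons c M ih =>
    rw [List.prod_cons, ← mul_assoc]
    rcases List.mem_cons.mp hb with rfl | hbM
    · rw [hbb, zero_mul]
    · rw [(hcomm c List.mem_cons_self).eq, mul_assoc,
        ih hbM (fun y hy => hcomm y (List.mem_cons_of_mem _ hy)), mul_zero]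

variable {L : List A}

theorem List.sum_mul_prod_eq_zero (hcomm : ∀ x ∈ L, ∀ y ∈ L, Commute x y)
    (hsq : ∀ x ∈ L, x * x = 0) : L.sum * L.prod = 0 := by
  have h : (L.map fun x => x * L.prod).sum = 0 := List.sum_eq_zero fun z hz => by
    obtain ⟨x, hx, rfl⟩ := List.mem_map.mp hz
    exact List.mul_prod_eq_zero_of_mem hx (hcomm x hx) (hsq x hx)
  simpa [List.sum_map_mul_right] using h

theorem List.sum_pow_length_eq_factorial_smul_prod (hcomm : ∀ x ∈ L, ∀ y ∈ L, Commute x y)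
    (hsq : ∀ x ∈ L, x * x = 0) : L.sum ^ L.length = L.length.factorial • L.prod := by
  induction L with
  | nil => simp
  | cons x M ih =>
    have hcommM : ∀ a ∈ M, ∀ b ∈ M, Commute a b := fun a ha b hb =>
      hcomm a (List.mem_cons_of_mem _ ha) b (List.mem_cons_of_mem _ hb)
    have hsqM : ∀ a ∈ M, a * a = 0 := fun a ha => hsq a (List.mem_cons_of_mem _ ha)
    have hpowM := ih hcommM hsqM
    have hxM : Commute x M.sum := Commute.list_sum_right _ _ fun y hy =>
      hcomm x List.mem_cons_self y (List.mem_cons_of_mem _ hy)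
    have hvanish : M.sum ^ (M.length + 1) = 0 := by
      rw [pow_succ', hpowM, mul_smul_comm, List.sum_mul_prod_eq_zero hcommM hsqM, smul_zero]
    rw [List.sum_cons, List.length_cons, List.prod_cons,
      hxM.add_pow_succ_of_mul_self_eq_zero (hsq x List.mem_cons_self), hvanish, zero_add, hpowM,
      mul_smul_comm, smul_smul, Nat.factorial_succ]

end SquareZero

theorem commute_mul_of_anticomm {A : Type*} [Ring A] {x c d : A} (hc : x * c = -(c * x))
    (hd : x * d = -(d * x)) : Commute x (c * d) := by
  rw [Commute, SemiconjBy, ← mul_assoc, hc, neg_mul, mul_assoc, hd, mul_neg, neg_neg, mul_assoc]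

section ExteriorAlgebra

open ExteriorAlgebra

variable {R M : Type*} [CommRing R] [AddCommGroup M] [Module R M]

theorem ExteriorAlgebra.ι_mul_ι_anticomm (u v : M) : ι R u * ι R v = -(ι R v * ι R u) :=
  eq_neg_of_add_eq_zero_left (ι_add_mul_swap u v)

theorem ExteriorAlgebra.commute_ι_mul_ι (a b c d : M) :
    Commute (ι R a * ι R b) (ι R c * ι R d) :=
  (commute_mul_of_anticomm (ι_mul_ι_anticomm a c) (ι_mul_ι_anticomm a d)).mul_left
    (commute_mul_of_anticomm (ι_mul_ι_anticomm b c) (ι_mul_ι_anticomm b d))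

theorem ExteriorAlgebra.ι_mul_ι_mul_self (a b : M) : ι R a * ι R b * (ι R a * ι R b) = 0 := by
  rw [mul_assoc, ← mul_assoc (ι R b), ι_mul_ι_anticomm b a, neg_mul, mul_neg,
    ← mul_assoc, ← mul_assoc, ι_sq_zero, zero_mul, zero_mul, neg_zero]

end ExteriorAlgebra

section PairProducts

open ExteriorAlgebra

/-- The summands `ψ_s^j ∧ ψ̄_s^j` of `tr Φ`, listed in the order in which `T` multiplies them. -/
def pairProducts (k n : ℕ) : List (ExteriorAlgebra ℝ (V k n)) :=
  ((List.finRange n).map fun s => (List.finRange k).map fun j => ψ k n s j * ψb k n s j).flatten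

variable {k n : ℕ}

theorem length_pairProducts : (pairProducts k n).length = k * n := by
  simp [pairProducts, List.length_flatten, Function.comp_def, Nat.mul_comm]

theorem prod_pairProducts : (pairProducts k n).prod = T k n := by
  rw [pairProducts, List.prod_flatten, List.map_map]
  rfl

theorem sum_pairProducts : (pairProducts k n).sum = trPhi k n := by
  simp only [pairProducts, List.sum_flatten, List.map_map, trPhi, ω]
  rw [Finset.sum_comm]
  simp only [Function.comp_def, Fin.sum_univ_def]

theorem exists_eq_ι_mul_ι_of_mem_pairProducts {x : ExteriorAlgebra ℝ (V k n)}
    (hx : x ∈ pairProducts k n) : ∃ u v : V k n, x = ι ℝ u * ι ℝ v := by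
  simp only [pairProducts, List.mem_flatten, List.mem_map, List.mem_finRange, true_and] at hx
  obtain ⟨_, ⟨s, rfl⟩, hx⟩ := hx
  obtain ⟨j, -, rfl⟩ := List.mem_map.mp hx
  exact ⟨_, _, rfl⟩

theorem commute_of_mem_pairProducts {x y : ExteriorAlgebra ℝ (V k n)}
    (hx : x ∈ pairProducts k n) (hy : y ∈ pairProducts k n) : Commute x y := by
  obtain ⟨a, b, rfl⟩ := exists_eq_ι_mul_ι_of_mem_pairProducts hx
  obtain ⟨c, d, rfl⟩ := exists_eq_ι_mul_ι_of_mem_pairProducts hy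
  exact commute_ι_mul_ι a b c d

theorem mul_self_eq_zero_of_mem_pairProducts {x : ExteriorAlgebra ℝ (V k n)}
    (hx : x ∈ pairProducts k n) : x * x = 0 := by
  obtain ⟨a, b, rfl⟩ := exists_eq_ι_mul_ι_of_mem_pairProducts hx
  exact ι_mul_ι_mul_self a b

end PairProducts

theorem trPhi_pow_top_general (k n : ℕ) :
    (trPhi k n) ^ (k * n) = ((k * n).factorial : ℝ) • T k n := by
  have h := List.sum_pow_length_eq_factorial_smul_prod (L := pairProducts k n)
    (fun _ hx _ hy => commute_of_mem_pairProducts hx hy)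
    (fun _ hx => mul_self_eq_zero_of_mem_pairProducts hx)
  rw [sum_pairProducts, length_pairProducts, prod_pairProducts] at h
  rw [h, Nat.cast_smul_eq_nsmul]

/-- `(tr Φ)^{kn} = (kn)! · T`, the fermionic representation of
`∫_{G(k,N)} (σ₁^∨)^{kN−k²} = (kN−k²)! ∏_{j=0}^{k−1} j! / ∏_{j=N−k}^{N−1} j!`. -/
theorem trPhi_pow_top (k N n : ℕ) (hk : 1 ≤ k) (hN : k < N) (hn : n = N - k) :
    (trPhi k n) ^ (k * n) = ((k * n).factorial : ℝ) • T k n :=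
  trPhi_pow_top_general k n
end
end

section
/- Let k, N be natural numbers with 1 ≤ k < N, n := N − k, and assume kn ≥ 2. Then in Λ(V): (tr Φ)^{kn−2} ∧ tr(Φ²) = (kn−2)! · k · n · (N − 2k) · T. (This is the evaluation of the fermion integral P₁ = ∫Dψ (tr Φ)^{kN−k²−2} tr(Φ²).) -/
noncomputable section

/-!
Products `ψ_s^i ψ̄_s^j` of two generators have even degree, hence are central, so the whole
computation takes place in the commutative center of `Λ(V)`. There `tr Φ = ∑ₓ dₓ` with
`d_{(s,i)} = ψ_s^i ψ̄_s^i` square-zero, so `(∑ₓ dₓ)^m` is `m!` times the sum of the products of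
`m` distinct `dₓ`, and every `dₓ` with `dₓ u = 0` may be dropped from the sum in
`(∑ₓ dₓ)^m u`. A term `ψ_s^i ψ̄_s^j ψ_t^j ψ̄_t^i` of `tr(Φ²)` is `d_{(s,i)} d_{(t,i)}` if `i = j`,
`s ≠ t`, and `-d_{(s,i)} d_{(s,j)}` if `i ≠ j`, `s = t`; each contributes `±(kn-2)! T`. When
`i ≠ j` and `s ≠ t` it kills four `dₓ`, leaving too few for the power `kn-2`, and it vanishes.
Summing, `(kn-2)! (k n (n-1) - n k (k-1)) = (kn-2)! k n (N-2k)`.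
-/

open Finset
open scoped Nat

section SquareZero

variable {C : Type*} [CommSemiring C]

theorem add_pow_mul_eq_pow_mul_of_mul_eq_zero {a b u : C} (hb : b * u = 0) (p : ℕ) :
    (a + b) ^ p * u = a ^ p * u := by
  induction p with
  | zero => simp
  | succ p ih =>
    calc (a + b) ^ (p + 1) * u = (a + b) ^ p * u * (a + b) := by ring
      _ = a ^ (p + 1) * u + a ^ p * (b * u) := by rw [ih]; ring
      _ = a ^ (p + 1) * u := by rw [hb, mul_zero, add_zero]

theorem add_pow_succ_of_mul_self_eq_zero {a : C} (ha : a * a = 0) (b : C) (p : ℕ) :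
    (a + b) ^ (p + 1) = (p + 1) * a * b ^ p + b ^ (p + 1) := by
  induction p with
  | zero => simp
  | succ p ih =>
    calc (a + b) ^ (p + 2) = ((p + 1) * a * b ^ p + b ^ (p + 1)) * (a + b) := by
          rw [pow_succ, ih]
      _ = (p + 1) * b ^ p * (a * a) + ((p + 1 + 1) * a * b ^ (p + 1) + b ^ (p + 2)) := by ring
      _ = ((p + 1 : ℕ) + 1) * a * b ^ (p + 1) + b ^ (p + 1 + 1) := by
          rw [ha]; push_cast; ring

end SquareZero

namespace Finset

variable {C ι : Type*} [CommSemiring C] {d : ι → C}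

theorem prod_mul_eq_zero_of_mem (hd : ∀ x, d x * d x = 0) {s : Finset ι} {z : ι} (hz : z ∈ s) :
    (∏ x ∈ s, d x) * d z = 0 := by
  classical
  rw [← mul_prod_erase s d hz, mul_right_comm, hd, zero_mul]

theorem prod_mul_sum_eq_zero (hd : ∀ x, d x * d x = 0) (s : Finset ι) :
    (∏ x ∈ s, d x) * ∑ x ∈ s, d x = 0 := by
  rw [mul_sum]
  exact sum_eq_zero fun z hz => prod_mul_eq_zero_of_mem hd hz

theorem sum_pow_card_eq_factorial_mul_prod [DecidableEq ι] (hd : ∀ x, d x * d x = 0)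
    (s : Finset ι) : (∑ x ∈ s, d x) ^ #s = (#s)! * ∏ x ∈ s, d x := by
  induction s using Finset.induction_on with
  | empty => simp
  | insert a s ha ih =>
    have hs : (∑ x ∈ s, d x) ^ (#s + 1) = 0 := by
      rw [pow_succ, ih, mul_assoc, prod_mul_sum_eq_zero hd, mul_zero]
    rw [sum_insert ha, card_insert_of_notMem ha, add_pow_succ_of_mul_self_eq_zero (hd a), ih, hs,
      prod_insert ha, Nat.factorial_succ]
    push_cast
    ring

theorem sum_pow_eq_zero_of_card_lt [DecidableEq ι] (hd : ∀ x, d x * d x = 0) {s : Finset ι}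
    {p : ℕ} (hp : #s < p) : (∑ x ∈ s, d x) ^ p = 0 := by
  obtain ⟨q, rfl⟩ := Nat.exists_eq_add_of_le hp
  rw [pow_add, pow_succ, sum_pow_card_eq_factorial_mul_prod hd, mul_assoc _ (∏ x ∈ s, d x),
    prod_mul_sum_eq_zero hd, mul_zero, zero_mul]

theorem sum_pow_mul_eq_sum_sdiff_pow_mul [DecidableEq ι] {s B : Finset ι} (hB : B ⊆ s) {u : C}
    (hu : ∀ z ∈ B, d z * u = 0) (p : ℕ) :
    (∑ x ∈ s, d x) ^ p * u = (∑ x ∈ s \ B, d x) ^ p * u := by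
  rw [← sum_sdiff hB]
  exact add_pow_mul_eq_pow_mul_of_mul_eq_zero (by rw [sum_mul]; exact sum_eq_zero hu) p

variable [Fintype ι] [DecidableEq ι]

theorem sum_pow_mul_eq_zero (hd : ∀ x, d x * d x = 0) {B : Finset ι} {u : C}
    (hu : ∀ z ∈ B, d z * u = 0) {p : ℕ} (hp : Fintype.card ι < #B + p) :
    (∑ x, d x) ^ p * u = 0 := by
  have hB := card_le_univ B
  rw [sum_pow_mul_eq_sum_sdiff_pow_mul (subset_univ B) hu,
    sum_pow_eq_zero_of_card_lt hd (by rw [card_univ_sdiff]; omega), zero_mul]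

theorem sum_pow_mul_mul_eq_factorial_mul_prod (hd : ∀ x, d x * d x = 0) {x y : ι} (hxy : x ≠ y) :
    (∑ z, d z) ^ (Fintype.card ι - 2) * (d x * d y) = (Fintype.card ι - 2)! * ∏ z, d z := by
  have hu : ∀ z ∈ ({x, y} : Finset ι), d z * (d x * d y) = 0 := by
    simp only [mem_insert, mem_singleton]
    rintro z (rfl | rfl)
    · rw [← mul_assoc, hd, zero_mul]
    · rw [mul_left_comm, hd, mul_zero]
  have hcard : #(univ \ {x, y}) = Fintype.card ι - 2 := by rw [card_univ_sdiff, card_pair hxy]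
  rw [sum_pow_mul_eq_sum_sdiff_pow_mul (subset_univ _) hu, ← hcard,
    sum_pow_card_eq_factorial_mul_prod hd, mul_assoc, ← prod_pair hxy, prod_sdiff (subset_univ _)]

end Finset

namespace ExteriorAlgebra

variable {R M : Type*} [CommRing R] [AddCommGroup M] [Module R M]

theorem ι_mul_ι_comm (a b : M) : ι R a * ι R b = -(ι R b * ι R a) :=
  eq_neg_of_add_eq_zero_left (ι_add_mul_swap a b)

theorem ι_mul_ι_mem_center (a b : M) :
    ι R a * ι R b ∈ Subalgebra.center R (ExteriorAlgebra R M) := by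
  rw [Subalgebra.mem_center_iff]
  intro x
  induction x using ExteriorAlgebra.induction with
  | algebraMap r => exact Algebra.commutes r _
  | ι c => rw [← mul_assoc, ι_mul_ι_comm c a, neg_mul, mul_assoc, ι_mul_ι_comm c b, mul_neg,
      neg_neg, mul_assoc]
  | mul x y hx hy => rw [mul_assoc, hy, ← mul_assoc, hx, mul_assoc]
  | add x y hx hy => rw [add_mul, mul_add, hx, hy]

theorem ι_mul_ι_commute (a b : M) (x : ExteriorAlgebra R M) : Commute (ι R a * ι R b) x :=
  ((Subalgebra.mem_center_iff.mp (ι_mul_ι_mem_center a b)) x).symm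

theorem ι_mul_ι_mul_ι_mul_ι_of_eq_left (a b c : M) : ι R a * ι R b * (ι R a * ι R c) = 0 := by
  rw [← mul_assoc, ι_mul_ι_commute a b (ι R a), ← mul_assoc, ι_sq_zero, zero_mul, zero_mul]

theorem ι_mul_ι_mul_ι_mul_ι_of_eq_right (a b c : M) : ι R a * ι R c * (ι R b * ι R c) = 0 := by
  rw [mul_assoc, ← (ι_mul_ι_commute b c (ι R c)).eq, mul_assoc (ι R b), ι_sq_zero, mul_zero,
    mul_zero]

theorem ι_mul_ι_mul_ι_mul_ι_swap (a b c e : M) :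
    ι R a * ι R b * (ι R c * ι R e) = -(ι R a * ι R e * (ι R c * ι R b)) := by
  rw [ι_mul_ι_comm c b, mul_neg, neg_neg, mul_assoc (ι R a) (ι R e),
    ← (ι_mul_ι_commute b c (ι R e)).eq, mul_assoc (ι R b), mul_assoc]

end ExteriorAlgebra

section Fermions

def ψψb (k n : ℕ) (s : Fin n) (i j : Fin k) : Subalgebra.center ℝ (ExteriorAlgebra ℝ (V k n)) :=
  ⟨ψ k n s i * ψb k n s j, ExteriorAlgebra.ι_mul_ι_mem_center _ _⟩

variable {k n : ℕ}

@[simp]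
theorem coe_ψψb (s : Fin n) (i j : Fin k) :
    (ψψb k n s i j : ExteriorAlgebra ℝ (V k n)) = ψ k n s i * ψb k n s j :=
  rfl

theorem ψψb_mul_ψψb_of_eq_left (s : Fin n) (i j j' : Fin k) :
    ψψb k n s i j * ψψb k n s i j' = 0 :=
  Subtype.ext (ExteriorAlgebra.ι_mul_ι_mul_ι_mul_ι_of_eq_left _ _ _)

theorem ψψb_mul_ψψb_of_eq_right (s : Fin n) (i i' j : Fin k) :
    ψψb k n s i j * ψψb k n s i' j = 0 :=
  Subtype.ext (ExteriorAlgebra.ι_mul_ι_mul_ι_mul_ι_of_eq_right _ _ _)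

theorem ψψb_mul_ψψb_swap (s : Fin n) (i j : Fin k) :
    ψψb k n s i j * ψψb k n s j i = -(ψψb k n s i i * ψψb k n s j j) :=
  Subtype.ext (ExteriorAlgebra.ι_mul_ι_mul_ι_mul_ι_swap _ _ _ _)

theorem sum_ψψb_pow_mul_ψψb_mul_ψψb_of_ne_of_ne {s t : Fin n} {i j : Fin k} (hst : s ≠ t)
    (hij : i ≠ j) :
    (∑ x : Fin n × Fin k, ψψb k n x.1 x.2 x.2) ^ (k * n - 2) * (ψψb k n s i j * ψψb k n t j i) =
      0 := by
  classical
  have hu : ∀ z ∈ ({(s, i), (s, j), (t, i), (t, j)} : Finset (Fin n × Fin k)),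
      ψψb k n z.1 z.2 z.2 * (ψψb k n s i j * ψψb k n t j i) = 0 := by
    simp only [mem_insert, mem_singleton]
    rintro z (rfl | rfl | rfl | rfl)
    · rw [← mul_assoc, ψψb_mul_ψψb_of_eq_left, zero_mul]
    · rw [← mul_assoc, ψψb_mul_ψψb_of_eq_right, zero_mul]
    · rw [mul_left_comm, ψψb_mul_ψψb_of_eq_right, mul_zero]
    · rw [mul_left_comm, ψψb_mul_ψψb_of_eq_left, mul_zero]
  have hB : #({(s, i), (s, j), (t, i), (t, j)} : Finset (Fin n × Fin k)) = 4 := by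
    rw [card_insert_of_notMem, card_insert_of_notMem, card_pair] <;> simp [hij, hst, hij.symm]
  have hcard : Fintype.card (Fin n × Fin k) = k * n := by simp [mul_comm]
  exact sum_pow_mul_eq_zero (fun _ => ψψb_mul_ψψb_of_eq_left _ _ _ _) hu
    (by rw [hB, hcard]; omega)

theorem sum_ψψb_pow_mul_ψψb_mul_ψψb (s t : Fin n) (i j : Fin k) :
    (∑ x : Fin n × Fin k, ψψb k n x.1 x.2 x.2) ^ (k * n - 2) * (ψψb k n s i j * ψψb k n t j i) =
      (((k * n - 2)! : ℝ) * ((if i = j then 1 else 0) - if s = t then 1 else 0)) •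
        ∏ x : Fin n × Fin k, ψψb k n x.1 x.2 x.2 := by
  classical
  have hpair {x y : Fin n × Fin k} (hxy : x ≠ y) :
      (∑ z : Fin n × Fin k, ψψb k n z.1 z.2 z.2) ^ (k * n - 2) *
        (ψψb k n x.1 x.2 x.2 * ψψb k n y.1 y.2 y.2) =
          ((k * n - 2)! : ℝ) • ∏ z : Fin n × Fin k, ψψb k n z.1 z.2 z.2 := by
    have hcard : Fintype.card (Fin n × Fin k) = k * n := by simp [mul_comm]
    rw [← hcard, sum_pow_mul_mul_eq_factorial_mul_prod (fun _ => ψψb_mul_ψψb_of_eq_left _ _ _ _)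
      hxy, ← nsmul_eq_mul, Nat.cast_smul_eq_nsmul]
  rcases eq_or_ne i j with rfl | hij <;> rcases eq_or_ne s t with rfl | hst
  · simp [ψψb_mul_ψψb_of_eq_left]
  · rw [hpair (x := (s, i)) (y := (t, i)) (by simp [hst])]
    simp [hst]
  -- `mul_neg` does not fire here: the `Neg` of the center is not reducibly that of its `CommRing`.
  · rw [ψψb_mul_ψψb_swap, ← neg_one_smul ℝ (_ * _), mul_smul_comm,
      hpair (x := (s, i)) (y := (s, j)) (by simp [hij]), smul_smul]
    simp [hij]
  · rw [sum_ψψb_pow_mul_ψψb_mul_ψψb_of_ne_of_ne hst hij]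
    simp [hij, hst]

theorem sum_ψψb_pow_mul_sum_ψψb_mul_ψψb :
    (∑ x : Fin n × Fin k, ψψb k n x.1 x.2 x.2) ^ (k * n - 2) *
        ∑ i, ∑ j, ∑ s, ∑ t, ψψb k n s i j * ψψb k n t j i =
      (((k * n - 2)! : ℝ) * k * n * (n - k)) • ∏ x : Fin n × Fin k, ψψb k n x.1 x.2 x.2 := by
  simp only [mul_sum, sum_ψψb_pow_mul_ψψb_mul_ψψb, ← sum_smul]
  congr 1
  simp only [mul_sub, sum_sub_distrib, mul_ite, mul_one, mul_zero, sum_ite_eq, mem_univ, if_true,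
    sum_const, card_fin, nsmul_eq_mul]
  ring

theorem trPhi_eq_coe : trPhi k n = ↑(∑ x : Fin n × Fin k, ψψb k n x.1 x.2 x.2) := by
  rw [AddSubmonoidClass.coe_finsetSum, Fintype.sum_prod_type, sum_comm]
  rfl

theorem trPhi2_eq_coe :
    trPhi2 k n = ↑(∑ i, ∑ j, ∑ s, ∑ t, ψψb k n s i j * ψψb k n t j i) := by
  simp only [trPhi2, ω, sum_mul_sum, AddSubmonoidClass.coe_finsetSum, MulMemClass.coe_mul,
    coe_ψψb]

theorem T_eq_coe : T k n = ↑(∏ x : Fin n × Fin k, ψψb k n x.1 x.2 x.2) := by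
  simp only [T, Fintype.prod_prod_type, Fin.prod_univ_def, SubmonoidClass.coe_list_prod,
    List.map_map, Function.comp_def, coe_ψψb]

end Fermions

theorem P1_eval_general (k N n : ℕ) (hN : k < N) (hn : n = N - k) :
    (trPhi k n) ^ (k * n - 2) * trPhi2 k n =
      (((k * n - 2).factorial : ℝ) * (k : ℝ) * (n : ℝ) * ((N : ℝ) - 2 * (k : ℝ))) •
        T k n := by
  have hN' : (N : ℝ) = n + k := by rw [hn, Nat.cast_sub hN.le]; ring
  rw [trPhi_eq_coe, trPhi2_eq_coe, T_eq_coe, ← SubmonoidClass.coe_pow, ← MulMemClass.coe_mul,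
    sum_ψψb_pow_mul_sum_ψψb_mul_ψψb, Subalgebra.coe_smul, hN']
  congr 1
  ring

/-- `(tr Φ)^{kn−2} ∧ tr(Φ²) = (kn−2)! · k · n · (N − 2k) · T`
(the fermion integral `P₁`). -/
theorem P1_eval (k N n : ℕ) (hk : 1 ≤ k) (hN : k < N) (hn : n = N - k)
    (hkn : 2 ≤ k * n) :
    (trPhi k n) ^ (k * n - 2) * trPhi2 k n =
      (((k * n - 2).factorial : ℝ) * (k : ℝ) * (n : ℝ) * ((N : ℝ) - 2 * (k : ℝ))) •
        T k n :=
  P1_eval_general k N n hN hn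
end
end
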